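/- For all complex z, θ_{0,0}((1+i)z, i) · exp(πi(1+i)z²) · θ_{0,1/2}(0,i) · θ_{1/2,0}(0,i) = θ_{0,0}(0,i) · θ_{0,1/2}(z,i) · θ_{1/2,0}(z,i). -/

import Mathlib

/-!
Splitting `ℤ²` into the sublattice `(1 + i) ℤ[i] = {(m, n) | m ≡ n mod 2}` and its coset gives the
addition formula
`θ₀₀(x, τ) θ₀₀(y, τ) = θ₀₀(x + y, 2τ) θ₀₀(x - y, 2τ) + θ₁₀(x + y, 2τ) θ₁₀(x - y, 2τ)`.
At `τ = 2i`, Jacobi's transformation `τ ↦ -1/τ` followed by the even/odd splitting of `ℤ` expresses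
`θ₀₀ ± θ₁₀` at `(1 - i) z` through `θ₀₀` and `θ₁₀` at `(1 + i) z`, so that
`√2 θ₀₁(z, i) θ₀₁(-iz, i) = e^{πiz²} θ₀₀((1 + i) z, i) θ₀₀(0, i)`. At `τ = i` the same
transformation turns `θ₁₀(z)` into `e^{-πz²} θ₀₁(-iz)`, and evaluating at `z = 0` eliminates `√2`.
Here `θ_{ab}` stands for `theta (a / 2) (b / 2)`.
-/

open Complex Real

/-- Theta function with characteristics a, b:
θ_{a,b}(z,τ) = Σ_{n∈ℤ} exp(πi(n+a)²τ + 2πi(n+a)(z+b)). -/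
noncomputable def theta (a b : ℝ) (z τ : ℂ) : ℂ :=
  ∑' n : ℤ, Complex.exp (Real.pi * Complex.I * ((n : ℂ) + (a : ℂ))^2 * τ +
    2 * Real.pi * Complex.I * ((n : ℂ) + (a : ℂ)) * (z + (b : ℂ)))

theorem HasSum.int_even_add_odd {M : Type*} [AddCommMonoid M] [TopologicalSpace M]
    [ContinuousAdd M] {f : ℤ → M} {a b : M} (he : HasSum (fun k ↦ f (2 * k)) a)
    (ho : HasSum (fun k ↦ f (2 * k + 1)) b) : HasSum f (a + b) := by
  have := mul_right_injective₀ (two_ne_zero' ℤ)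
  replace ho := ((add_left_injective 1).comp this).hasSum_range_iff.2 ho
  refine (this.hasSum_range_iff.2 he).add_isCompl ?_ ho
  simpa [Function.comp_def] using Int.isCompl_even_odd

theorem HasSum.int_prod_add_sub {M : Type*} [AddCommMonoid M] [TopologicalSpace M]
    [ContinuousAdd M] {f : ℤ × ℤ → M} {a b : M}
    (he : HasSum (fun q : ℤ × ℤ ↦ f (q.1 + q.2, q.1 - q.2)) a)
    (ho : HasSum (fun q : ℤ × ℤ ↦ f (q.1 + q.2 + 1, q.1 - q.2)) b) : HasSum f (a + b) := by
  have hinj (c : ℤ) : Function.Injective (fun q : ℤ × ℤ ↦ (q.1 + q.2 + c, q.1 - q.2)) := by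
    intro q q' h
    simp only [Prod.mk.injEq] at h
    ext <;> omega
  have hrange (c : ℤ) : Set.range (fun q : ℤ × ℤ ↦ (q.1 + q.2 + c, q.1 - q.2)) =
      (fun x : ℤ × ℤ ↦ x.1 + x.2 - c) ⁻¹' {n | Even n} := by
    ext ⟨m, n⟩
    simp only [Set.mem_range, Prod.mk.injEq, Prod.exists, Set.mem_preimage, Set.mem_ofPred_eq]
    constructor
    · rintro ⟨p, q, rfl, rfl⟩
      exact ⟨p, by ring⟩
    · rintro ⟨r, hr⟩
      exact ⟨r, r - n, by omega, by omega⟩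
  have hodd : (fun x : ℤ × ℤ ↦ x.1 + x.2 - 1) ⁻¹' {n | Even n} =
      (fun x : ℤ × ℤ ↦ x.1 + x.2) ⁻¹' {n | Odd n} := by
    ext x
    simp
  refine ((hinj 0).hasSum_range_iff.2 (by simpa [Function.comp_def] using he)).add_isCompl ?_
    ((hinj 1).hasSum_range_iff.2 ho)
  rw [hrange, hrange, hodd]
  simpa using Int.isCompl_even_odd.preimage (fun x : ℤ × ℤ ↦ x.1 + x.2)

noncomputable def thetaTerm (a b : ℝ) (n : ℤ) (z τ : ℂ) : ℂ :=
  cexp (π * I * (n + a) ^ 2 * τ + 2 * π * I * (n + a) * (z + b))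

theorem theta_eq_tsum_thetaTerm (a b : ℝ) (z τ : ℂ) :
    theta a b z τ = ∑' n, thetaTerm a b n z τ := rfl

theorem thetaTerm_eq_exp_mul_jacobiTheta₂_term (a b : ℝ) (n : ℤ) (z τ : ℂ) :
    thetaTerm a b n z τ =
      cexp (π * I * a ^ 2 * τ + 2 * π * I * a * (z + b)) *
        jacobiTheta₂_term n (z + b + a * τ) τ := by
  rw [thetaTerm, jacobiTheta₂_term, ← Complex.exp_add]
  ring_nf

theorem theta_eq_exp_mul_jacobiTheta₂ (a b : ℝ) (z τ : ℂ) :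
    theta a b z τ =
      cexp (π * I * a ^ 2 * τ + 2 * π * I * a * (z + b)) * jacobiTheta₂ (z + b + a * τ) τ := by
  simp_rw [theta_eq_tsum_thetaTerm, thetaTerm_eq_exp_mul_jacobiTheta₂_term, jacobiTheta₂,
    tsum_mul_left]

theorem theta_zero_left (b : ℝ) (z τ : ℂ) : theta 0 b z τ = jacobiTheta₂ (z + b) τ := by
  simp [theta_eq_exp_mul_jacobiTheta₂]

theorem theta_eq_theta_zero_right (a b : ℝ) (z τ : ℂ) : theta a b z τ = theta a 0 (z + b) τ := by
  simp [theta_eq_exp_mul_jacobiTheta₂]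

theorem summable_norm_thetaTerm (a b : ℝ) (z : ℂ) {τ : ℂ} (hτ : 0 < τ.im) :
    Summable fun n ↦ ‖thetaTerm a b n z τ‖ := by
  simp_rw [thetaTerm_eq_exp_mul_jacobiTheta₂_term, norm_mul]
  exact (summable_norm_iff.mpr ((summable_jacobiTheta₂_term_iff _ τ).mpr hτ)).mul_left _

theorem summable_thetaTerm (a b : ℝ) (z : ℂ) {τ : ℂ} (hτ : 0 < τ.im) :
    Summable fun n ↦ thetaTerm a b n z τ :=
  summable_norm_iff.mp (summable_norm_thetaTerm a b z hτ)

theorem theta_add_one (a b : ℝ) (z τ : ℂ) :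
    theta a b (z + 1) τ = cexp (2 * π * I * a) * theta a b z τ := by
  rw [theta_eq_exp_mul_jacobiTheta₂, theta_eq_exp_mul_jacobiTheta₂,
    show z + 1 + b + a * τ = z + b + a * τ + 1 by ring, jacobiTheta₂_add_left, ← mul_assoc,
    ← Complex.exp_add]
  ring_nf

theorem theta_zero_add_one (b : ℝ) (z τ : ℂ) : theta 0 b (z + 1) τ = theta 0 b z τ := by
  simpa using theta_add_one 0 b z τ

theorem theta_half_add_one (b : ℝ) (z τ : ℂ) :
    theta (1 / 2) b (z + 1) τ = -theta (1 / 2) b z τ := by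
  rw [theta_add_one]
  push_cast
  rw [show 2 * π * I * (1 / 2) = π * I by ring, Complex.exp_pi_mul_I, neg_one_mul]

theorem theta_eq_even_add_odd (a b : ℝ) (w σ : ℂ) (hσ : 0 < σ.im) :
    theta a b w σ =
      theta (a / 2) (2 * b) (2 * w) (4 * σ) + theta ((a + 1) / 2) (2 * b) (2 * w) (4 * σ) := by
  have h4σ : 0 < (4 * σ).im := by simpa using hσ
  have heven (k : ℤ) : thetaTerm a b (2 * k) w σ = thetaTerm (a / 2) (2 * b) k (2 * w) (4 * σ) := by
    rw [thetaTerm, thetaTerm]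
    push_cast
    ring_nf
  have hodd (k : ℤ) :
      thetaTerm a b (2 * k + 1) w σ = thetaTerm ((a + 1) / 2) (2 * b) k (2 * w) (4 * σ) := by
    rw [thetaTerm, thetaTerm]
    push_cast
    ring_nf
  simp_rw [theta_eq_tsum_thetaTerm]
  refine (HasSum.int_even_add_odd (M := ℂ) ?_ ?_).tsum_eq
  · simpa only [heven] using (summable_thetaTerm _ _ _ h4σ).hasSum
  · simpa only [hodd] using (summable_thetaTerm _ _ _ h4σ).hasSum

theorem theta_mul_theta (a a' b b' : ℝ) (x y : ℂ) {τ : ℂ} (hτ : 0 < τ.im) :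
    theta a b x τ * theta a' b' y τ =
      theta ((a + a') / 2) (b + b') (x + y) (2 * τ) *
          theta ((a - a') / 2) (b - b') (x - y) (2 * τ) +
        theta ((a + a' + 1) / 2) (b + b') (x + y) (2 * τ) *
          theta ((a - a' + 1) / 2) (b - b') (x - y) (2 * τ) := by
  have h2τ : 0 < (2 * τ).im := by simpa using hτ
  have heven (q : ℤ × ℤ) :
      thetaTerm a b (q.1 + q.2) x τ * thetaTerm a' b' (q.1 - q.2) y τ =
        thetaTerm ((a + a') / 2) (b + b') q.1 (x + y) (2 * τ) *
          thetaTerm ((a - a') / 2) (b - b') q.2 (x - y) (2 * τ) := by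
    simp only [thetaTerm, ← Complex.exp_add]
    push_cast
    ring_nf
  have hodd (q : ℤ × ℤ) :
      thetaTerm a b (q.1 + q.2 + 1) x τ * thetaTerm a' b' (q.1 - q.2) y τ =
        thetaTerm ((a + a' + 1) / 2) (b + b') q.1 (x + y) (2 * τ) *
          thetaTerm ((a - a' + 1) / 2) (b - b') q.2 (x - y) (2 * τ) := by
    simp only [thetaTerm, ← Complex.exp_add]
    push_cast
    ring_nf
  simp_rw [theta_eq_tsum_thetaTerm]
  rw [tsum_mul_tsum_of_summable_norm (summable_norm_thetaTerm _ _ _ hτ)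
      (summable_norm_thetaTerm _ _ _ hτ),
    tsum_mul_tsum_of_summable_norm (summable_norm_thetaTerm _ _ _ h2τ)
      (summable_norm_thetaTerm _ _ _ h2τ),
    tsum_mul_tsum_of_summable_norm (summable_norm_thetaTerm _ _ _ h2τ)
      (summable_norm_thetaTerm _ _ _ h2τ)]
  refine (HasSum.int_prod_add_sub (M := ℂ) ?_ ?_).tsum_eq
  · simpa only [heven] using (summable_mul_of_summable_norm (summable_norm_thetaTerm _ _ _ h2τ)
      (summable_norm_thetaTerm _ _ _ h2τ)).hasSum
  · simpa only [hodd] using (summable_mul_of_summable_norm (summable_norm_thetaTerm _ _ _ h2τ)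
      (summable_norm_thetaTerm _ _ _ h2τ)).hasSum

theorem jacobiTheta₂_ofReal_mul_I {c : ℝ} (hc : 0 < c) (z : ℂ) :
    jacobiTheta₂ z (c * I) =
      (√c : ℂ)⁻¹ * cexp (-π * z ^ 2 / c) * jacobiTheta₂ (-I * z / c) (I / c) := by
  have hc' : (c : ℂ) ≠ 0 := by exact_mod_cast hc.ne'
  have hsqrt : (-I * (c * I)) ^ (1 / 2 : ℂ) = (√c : ℂ) := by
    rw [show -I * (c * I) = c by linear_combination (-c : ℂ) * I_sq, Real.sqrt_eq_rpow,
      Complex.ofReal_cpow hc.le]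
    norm_num
  have hexp : -π * I * z ^ 2 / (c * I) = -π * z ^ 2 / c := by
    field_simp
  have hz : z / (c * I) = -I * z / c := by
    field_simp
    linear_combination z * I_sq
  have hτ : -1 / (c * I) = I / c := by
    field_simp
    linear_combination -I_sq
  rw [jacobiTheta₂_functional_equation, hsqrt, one_div, hexp, hz, hτ]

theorem theta_zero_add_theta_half_two_I (w : ℂ) :
    theta 0 0 w (2 * I) + theta (1 / 2) 0 w (2 * I) =
      √2 * cexp (-π * w ^ 2 / 2) * theta 0 0 (I * w) (2 * I) := by
  have hsplit := theta_eq_even_add_odd 0 0 (w / 2) (I / 2) (by simp)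
  have hfe := jacobiTheta₂_ofReal_mul_I two_pos (I * w)
  norm_num at hsplit hfe
  rw [show 2 * (w / 2) = w by ring, show 4 * (I / 2) = 2 * I by ring] at hsplit
  rw [show -(I * (I * w)) = w by linear_combination -w * I_sq] at hfe
  have hexp : cexp (-π * w ^ 2 / 2) * cexp (-(π * (I * w) ^ 2) / 2) = 1 := by
    rw [← Complex.exp_add, ← Complex.exp_zero]
    congr 1
    linear_combination -π * w ^ 2 / 2 * I_sq
  have hsqrt : (√2 : ℂ) * (√2 : ℂ)⁻¹ = 1 := mul_inv_cancel₀ (by simp)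
  rw [← hsplit]
  simp only [theta_zero_left, Complex.ofReal_zero, add_zero, hfe]
  linear_combination (-jacobiTheta₂ (w / 2) (I / 2)) *
    (cexp (-π * w ^ 2 / 2) * cexp (-(π * (I * w) ^ 2) / 2) * hsqrt + hexp)

theorem theta_zero_sub_theta_half_two_I (w : ℂ) :
    theta 0 0 w (2 * I) - theta (1 / 2) 0 w (2 * I) =
      √2 * cexp (-π * w ^ 2 / 2) * theta (1 / 2) 0 (I * w) (2 * I) := by
  have h := theta_zero_add_theta_half_two_I (w + 1)
  rw [theta_zero_add_one, theta_half_add_one, ← sub_eq_add_neg] at h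
  rw [h, theta_zero_left, theta_eq_exp_mul_jacobiTheta₂]
  push_cast
  have hexp : cexp (-π * (w + 1) ^ 2 / 2) = cexp (-π * w ^ 2 / 2) *
      cexp (π * I * (1 / 2) ^ 2 * (2 * I) + 2 * π * I * (1 / 2) * (I * w + 0)) := by
    rw [← Complex.exp_add]
    congr 1
    linear_combination (-π / 2 - π * w) * I_sq
  rw [show I * (w + 1) + 0 = I * w + 0 + 1 / 2 * (2 * I) by ring, hexp]
  ring

theorem theta_half_zero_I (z : ℂ) :
    theta (1 / 2) 0 z I = cexp (-π * z ^ 2) * theta 0 (1 / 2) (-I * z) I := by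
  have hfe := jacobiTheta₂_ofReal_mul_I one_pos (z + I / 2)
  simp only [ofReal_one, one_mul, Real.sqrt_one, inv_one, div_one] at hfe
  rw [theta_eq_exp_mul_jacobiTheta₂, theta_zero_left]
  push_cast
  rw [show z + 0 + 1 / 2 * I = z + I / 2 by ring, hfe,
    show -I * (z + I / 2) = -I * z + 1 / 2 by linear_combination -I_sq / 2, ← mul_assoc,
    ← Complex.exp_add]
  congr 2
  ring

theorem sqrt_two_mul_theta_zero_half_mul (z : ℂ) :
    √2 * (theta 0 (1 / 2) z I * theta 0 (1 / 2) (-I * z) I) =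
      cexp (π * I * z ^ 2) * (theta 0 0 ((1 + I) * z) I * theta 0 0 0 I) := by
  have hI : 0 < I.im := by simp
  have hprod := theta_mul_theta 0 0 (1 / 2) (1 / 2) z (-I * z) hI
  have hsq := theta_mul_theta 0 0 0 0 ((1 + I) * z) 0 hI
  norm_num at hprod hsq
  rw [theta_eq_theta_zero_right 0 1, theta_eq_theta_zero_right (1 / 2) 1, ofReal_one,
    theta_zero_add_one, theta_half_add_one, show z + -(I * z) = (1 - I) * z by ring,
    show z + I * z = (1 + I) * z by ring] at hprod
  have hplus := theta_zero_add_theta_half_two_I ((1 - I) * z)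
  have hminus := theta_zero_sub_theta_half_two_I ((1 - I) * z)
  have hexp : -π * ((1 - I) * z) ^ 2 / 2 = π * I * z ^ 2 := by
    linear_combination (-π * z ^ 2 / 2) * I_sq
  rw [hexp, show I * ((1 - I) * z) = (1 + I) * z by linear_combination -z * I_sq] at hplus hminus
  have hsqrt : (√2 : ℂ) ^ 2 = 2 := by norm_cast; simp
  set P := theta 0 0 ((1 + I) * z) (2 * I)
  set Q := theta (1 / 2) 0 ((1 + I) * z) (2 * I)
  set A := theta 0 0 ((1 - I) * z) (2 * I)
  set B := theta (1 / 2) 0 ((1 - I) * z) (2 * I)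
  set E := cexp (π * I * z ^ 2)
  rw [neg_mul, hprod, hsq]
  -- 2 (A P - B Q) = (A + B) (P - Q) + (A - B) (P + Q)
  linear_combination (√2 / 2 * (P - Q)) * hplus + (√2 / 2 * (P + Q)) * hminus +
    (E * (P ^ 2 + Q ^ 2) / 2) * hsqrt

/-- (1+i)-multiplication formula for θ_{0,0} at τ = i. -/
theorem theta_one_add_i_mult (z : ℂ) :
    theta 0 0 ((1 + Complex.I) * z) Complex.I *
      Complex.exp (Real.pi * Complex.I * (1 + Complex.I) * z^2) *
      theta 0 (1/2) 0 Complex.I * theta (1/2) 0 0 Complex.I =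
    theta 0 0 0 Complex.I * theta 0 (1/2) z Complex.I *
      theta (1/2) 0 z Complex.I := by
  have hz := sqrt_two_mul_theta_zero_half_mul z
  have h0 := sqrt_two_mul_theta_zero_half_mul 0
  simp only [mul_zero, zero_pow two_ne_zero, Complex.exp_zero, one_mul] at h0
  have hexp : cexp (π * I * (1 + I) * z ^ 2) = cexp (π * I * z ^ 2) * cexp (-π * z ^ 2) := by
    rw [← Complex.exp_add]
    congr 1
    linear_combination π * z ^ 2 * I_sq
  rw [theta_half_zero_I, theta_half_zero_I, hexp]
  simp only [mul_zero, zero_pow two_ne_zero, Complex.exp_zero, one_mul]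
  refine mul_left_cancel₀ (by simp : (√2 : ℂ) ≠ 0) ?_
  linear_combination (theta 0 0 ((1 + I) * z) I * cexp (π * I * z ^ 2) * cexp (-π * z ^ 2)) * h0 -
    (theta 0 0 0 I * cexp (-π * z ^ 2)) * hz
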